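/- Let (L, G) be a built lattice and let g ∈ G be join-irreducible. Then the set L \ (g), obtained by removing from L all elements having g as a G-factor, is again a lattice (a sub-join-semilattice of L with the same bottom element, closed under the join of L restricted to it). -/
import Mathlib


open scoped Classical

variable {L : Type*} [Lattice L] [BoundedOrder L] [Finite L]

/-- The join of a (finite) subset of `L`. -/
noncomputable def setJoin (S : Set L) : L := S.toFinite.toFinset.sup id

/-- The join of a subset of `L`, relative to a base point `a`. -/
noncomputable def joinFrom (a : L) (S : Set L) : L := a ⊔ setJoin S

/-- The `G`-factors of `F`: the maximal elements of `{g ∈ G | g ≤ F}`. -/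
def factors (G : Set L) (F : L) : Set L :=
  {g ∈ G | g ≤ F ∧ ∀ h ∈ G, h ≤ F → g ≤ h → g = h}

/-- `G` is a building set of the interval `[a, b]` of `L`: the join map
from the product of the intervals `[a, g]` over the `G`-factors `g` of `F`
to `[a, F]` is an order isomorphism, for every `F ∈ [a, b]`. -/
def IsBuildingIcc (a b : L) (G : Set L) : Prop :=
  G ⊆ Set.Icc a b ∧ a ∉ G ∧ ∀ F ∈ Set.Icc a b,
    ∃ e : (∀ g : factors G F, Set.Icc a (g : L)) ≃o Set.Icc a F,
      ∀ x, ((e x : L)) = joinFrom a (Set.range fun g => ((x g : L)))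

/-- `G` is a building set of the lattice `L`. -/
def IsBuilding (G : Set L) : Prop := IsBuildingIcc ⊥ ⊤ G

/-- `S` is a nested set of the built lattice `(L, G)`. -/
def IsNested (G S : Set L) : Prop :=
  S ⊆ G ∧ ∀ A ⊆ S, IsAntichain (· ≤ ·) A → 2 ≤ A.ncard → setJoin A ∉ G

/-- The building ideal generated by `g`. -/
def buildingIdeal (G : Set L) (g : L) : Set L := {F | g ∈ factors G F}

lemma le_setJoin {S : Set L} {x : L} (hx : x ∈ S) : x ≤ setJoin S :=
  Finset.le_sup (f := id) (by simpa [Set.Finite.mem_toFinset] using hx)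

/-- Removing the building ideal of a join-irreducible element `g ∈ G` from `L` yields a
lattice: `⊥ ∉ (g)`, and for `A, B ∉ (g)` the join `A ⊔ B` (computed in `L`) is again
not in `(g)`. -/
theorem deletion_is_lattice (G : Set L) (hG : IsBuilding G) (g : L) (hg : g ∈ G)
    (hirr : SupIrred g) :
    (⊥ : L) ∉ buildingIdeal G g ∧
      ∀ A B : L, A ∉ buildingIdeal G g → B ∉ buildingIdeal G g →
        A ⊔ B ∉ buildingIdeal G g := by
  obtain ⟨hGsub, hbotG, hiso⟩ := hG
  constructor
  · intro hmem
    have hgbot : g = ⊥ := le_bot_iff.mp hmem.2.1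
    exact hirr.1 (hgbot ▸ isMin_bot)
  · intro A B hA hB hF
    set F := A ⊔ B with hFdef
    obtain ⟨e, he⟩ := hiso F ⟨bot_le, le_top⟩
    set gF : factors G F := ⟨g, hF⟩ with hgF
    set u := e.symm ⟨A, bot_le, le_sup_left⟩ with hu
    set v := e.symm ⟨B, bot_le, le_sup_right⟩ with hv
    set t : ∀ h : factors G F, Set.Icc (⊥ : L) (h : L) :=
      fun h => ⟨(h : L), bot_le, le_rfl⟩ with ht
    -- each component is below the image
    have hcomp : ∀ (x) (h : factors G F), (x h : L) ≤ (e x : L) := by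
      intro x h
      rw [he]
      exact le_trans (le_setJoin (Set.mem_range_self h)) le_sup_right
    -- e t = F
    have htop : (e t : L) = F := by
      refine le_antisymm (e t).2.2 ?_
      have hsle : e.symm ⟨F, bot_le, le_rfl⟩ ≤ t := by
        intro h
        exact (e.symm ⟨F, bot_le, le_rfl⟩ h).2.2
      have := e.monotone hsle
      rw [e.apply_symm_apply] at this
      exact this
    -- componentwise sup
    set w : ∀ h : factors G F, Set.Icc (⊥ : L) (h : L) :=
      fun h => ⟨(u h : L) ⊔ (v h : L), bot_le, sup_le (u h).2.2 (v h).2.2⟩ with hw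
    have huw : u ≤ w := fun h => le_sup_left
    have hvw : v ≤ w := fun h => le_sup_right
    have hAle : A ≤ (e w : L) := by
      have := e.monotone huw
      rw [hu, e.apply_symm_apply] at this
      exact this
    have hBle : B ≤ (e w : L) := by
      have := e.monotone hvw
      rw [hv, e.apply_symm_apply] at this
      exact this
    have hew : e w = e t := by
      apply Subtype.ext
      rw [htop]
      exact le_antisymm (e w).2.2 (sup_le hAle hBle)
    have hwt : w = t := e.injective hew
    have hsup : (u gF : L) ⊔ (v gF : L) = g := by
      have := congrFun hwt gF
      simpa [hw, ht] using congrArg Subtype.val this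
    have hkey : ∀ C : L, C ∉ buildingIdeal G g → C ≤ F → ¬ g ≤ C := by
      intro C hC hCF hgC
      exact hC ⟨hg, hgC, fun h hh hhC hgh => hF.2.2 h hh (hhC.trans hCF) hgh⟩
    rcases hirr.2 hsup with h1 | h1
    · have : g ≤ A := by
        have h2 := hcomp u gF
        rw [h1, hu, e.apply_symm_apply] at h2
        exact h2
      exact hkey A hA le_sup_left this
    · have : g ≤ B := by
        have h2 := hcomp v gF
        rw [h1, hv, e.apply_symm_apply] at h2
        exact h2
      exact hkey B hB le_sup_right this
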